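/- Let Y be a 2-connected ladder, π : k[Y] → R_2(Y) the quotient map, j ∈ {1,…,k}, and e ≥ 1. Let P_j be the ideal of k[Y] generated by the variables X_{pq} with (p,q) ∈ Y, p ≤ c_j and q ≤ d_j, and let J = P_j^e. Then for every monomial ideal M of k[Y], the images satisfy π(J) ∩ π(M) = π(J ∩ M) as ideals of R_2(Y); in particular π(J) ∩ π(M) is generated by the images of the least common multiples of the monomial generators of J and of M. -/

import Mathlib

set_option maxHeartbeats 1000000
set_option synthInstance.maxHeartbeats 1000000

open CategoryTheory

namespace LadderDet

/-- The position `p` lies in the `m × n` grid `{1,…,m} × {1,…,n}`. -/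
def InGrid (m n : ℕ) (p : ℕ × ℕ) : Prop :=
  1 ≤ p.1 ∧ p.1 ≤ m ∧ 1 ≤ p.2 ∧ p.2 ≤ n

/-- `Y` is a ladder in the `m × n` grid. -/
def IsLadder (m n : ℕ) (Y : Set (ℕ × ℕ)) : Prop :=
  (∀ p ∈ Y, InGrid m n p) ∧
  ∀ i j p q : ℕ, (i, j) ∈ Y → (p, q) ∈ Y → i ≤ p → j ≤ q → (i, q) ∈ Y ∧ (p, j) ∈ Y

/-- A ladder together with the standard nontriviality assumptions:
`(1,n), (m,1) ∈ Y` and every row and every column of the grid meets `Y`. -/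
def StdLadder (m n : ℕ) (Y : Set (ℕ × ℕ)) : Prop :=
  IsLadder m n Y ∧ (1, n) ∈ Y ∧ (m, 1) ∈ Y ∧
  (∀ i, 1 ≤ i → i ≤ m → ∃ j, (i, j) ∈ Y) ∧
  (∀ j, 1 ≤ j → j ≤ n → ∃ i, (i, j) ∈ Y)

/-- Two positions differ by exactly `1` in exactly one coordinate. -/
def AdjStep (p q : ℕ × ℕ) : Prop :=
  (p.1 = q.1 ∧ (p.2 + 1 = q.2 ∨ q.2 + 1 = p.2)) ∨
  (p.2 = q.2 ∧ (p.1 + 1 = q.1 ∨ q.1 + 1 = p.1))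

/-- There is a path in `Y` from `p` to `q`. -/
def HasPath (Y : Set (ℕ × ℕ)) (p q : ℕ × ℕ) : Prop :=
  p ∈ Y ∧ q ∈ Y ∧
    Relation.ReflTransGen (fun a b => a ∈ Y ∧ b ∈ Y ∧ AdjStep a b) p q

/-- `Y` is path-connected. -/
def PathConnected (Y : Set (ℕ × ℕ)) : Prop :=
  ∀ p ∈ Y, ∀ q ∈ Y, HasPath Y p q

/-- `M` is (the set of entries of) a `t × t` minor of `Y`. -/
def IsMinor (t : ℕ) (Y : Set (ℕ × ℕ)) (M : Set (ℕ × ℕ)) : Prop :=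
  ∃ r c : Fin t → ℕ, StrictMono r ∧ StrictMono c ∧
    (∀ u v, (r u, c v) ∈ Y) ∧ M = {p | ∃ u v, p = (r u, c v)}

/-- `Y` is `t`-disconnected. -/
def TDisconnected (m n t : ℕ) (Y : Set (ℕ × ℕ)) : Prop :=
  ∃ Z₁ Z₂ : Set (ℕ × ℕ), Z₁.Nonempty ∧ Z₂.Nonempty ∧
    IsLadder m n Z₁ ∧ IsLadder m n Z₂ ∧ Z₁ ∩ Z₂ = ∅ ∧ Z₁ ∪ Z₂ = Y ∧
    ∀ M, IsMinor t Y M → M ⊆ Z₁ ∨ M ⊆ Z₂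

/-- `Y` is `t`-connected. -/
def TConnected (m n t : ℕ) (Y : Set (ℕ × ℕ)) : Prop := ¬ TDisconnected m n t Y

/-- `p` is a lower inside corner of `Y`. -/
def IsLowerCorner (Y : Set (ℕ × ℕ)) (p : ℕ × ℕ) : Prop :=
  p ∈ Y ∧ (p.1 - 1, p.2) ∈ Y ∧ (p.1, p.2 - 1) ∈ Y ∧ (p.1 - 1, p.2 - 1) ∉ Y

/-- `p` is an upper inside corner of `Y`. -/
def IsUpperCorner (Y : Set (ℕ × ℕ)) (p : ℕ × ℕ) : Prop :=
  p ∈ Y ∧ (p.1 + 1, p.2) ∈ Y ∧ (p.1, p.2 + 1) ∈ Y ∧ (p.1 + 1, p.2 + 1) ∉ Y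

/-- `Y` is one-sided: path-connected and with no lower or no upper inside corners. -/
def OneSided (Y : Set (ℕ × ℕ)) : Prop :=
  PathConnected Y ∧
  ((∀ p, ¬ IsLowerCorner Y p) ∨ (∀ p, ¬ IsUpperCorner Y p))

/-- `Y` is two-sided: path-connected with at least one lower and one upper inside corner. -/
def TwoSided (Y : Set (ℕ × ℕ)) : Prop :=
  PathConnected Y ∧ (∃ p, IsLowerCorner Y p) ∧ (∃ p, IsUpperCorner Y p)

section Algebra

variable (k : Type) [Field k]

/-- The `t × t` minor of the generic matrix determined by rows `r` and columns `c`,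
as an element of the polynomial ring `k[Y]`. -/
noncomputable def minorPoly {t : ℕ} {Y : Set (ℕ × ℕ)} (r c : Fin t → ℕ)
    (h : ∀ u v, (r u, c v) ∈ Y) : MvPolynomial Y k :=
  (Matrix.of fun u v : Fin t =>
    (MvPolynomial.X ⟨(r u, c v), h u v⟩ : MvPolynomial Y k)).det

/-- The ideal `I_t(Y) ⊆ k[Y]` generated by all `t × t` minors of `X` lying in `Y`. -/
noncomputable def minorIdeal (t : ℕ) (Y : Set (ℕ × ℕ)) : Ideal (MvPolynomial Y k) :=
  Ideal.span {f | ∃ (r c : Fin t → ℕ) (_ : StrictMono r) (_ : StrictMono c)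
    (h : ∀ u v, (r u, c v) ∈ Y), f = minorPoly k r c h}

/-- The ladder determinantal ring `R_t(Y) = k[Y]/I_t(Y)`. -/
abbrev LadderRing (t : ℕ) (Y : Set (ℕ × ℕ)) : Type :=
  MvPolynomial Y k ⧸ minorIdeal k t Y

/-- The residue `x_{ij}` of the variable `X_{ij}` in `R_t(Y)`. -/
noncomputable def xres (t : ℕ) {Y : Set (ℕ × ℕ)} (p : ℕ × ℕ) (hp : p ∈ Y) :
    LadderRing k t Y :=
  Ideal.Quotient.mk (minorIdeal k t Y) (MvPolynomial.X ⟨p, hp⟩)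

/-- The ideal of `R_2(Y)` generated by the residues of the variables in row `r`
(an ideal of type `𝔮`). -/
noncomputable def rowIdeal (Y : Set (ℕ × ℕ)) (r : ℕ) : Ideal (LadderRing k 2 Y) :=
  Ideal.span {z | ∃ q, ∃ h : (r, q) ∈ Y, z = xres k 2 (r, q) h}

/-- The ideal of `R_2(Y)` generated by the residues of the variables in column `b`
(an ideal of type `𝔮'`). -/
noncomputable def colIdeal (Y : Set (ℕ × ℕ)) (b : ℕ) : Ideal (LadderRing k 2 Y) :=
  Ideal.span {z | ∃ p, ∃ h : (p, b) ∈ Y, z = xres k 2 (p, b) h}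

/-- The ideal `𝔭` of `R_2(Y)` generated by the residues of the variables weakly
northwest of the position `(c, d)`. -/
noncomputable def cornerIdeal (Y : Set (ℕ × ℕ)) (c d : ℕ) : Ideal (LadderRing k 2 Y) :=
  Ideal.span {z | ∃ p q, ∃ h : (p, q) ∈ Y, p ≤ c ∧ q ≤ d ∧ z = xres k 2 (p, q) h}

end Algebra

/-- An ideal of `k[Y]` is a monomial ideal if it is generated by monomials. -/
def IsMonomialIdeal {k : Type} [Field k] {Y : Set (ℕ × ℕ)}
    (M : Ideal (MvPolynomial Y k)) : Prop :=
  ∃ S : Set (Y →₀ ℕ), M = Ideal.span ((fun d => MvPolynomial.monomial d (1 : k)) '' S)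

/-- A finitely generated module `C` over a commutative ring `R` is semidualizing if
the natural homothety map `R → Hom_R(C, C)` is bijective and `Ext^i_R(C, C) = 0` for
all `i ≥ 1`. -/
def IsSemidualizing {R : Type} [CommRing R] (C : ModuleCat.{0} R) : Prop :=
  Module.Finite R C ∧
  Function.Bijective (LinearMap.lsmul R C) ∧
  ∀ i : ℕ, 1 ≤ i →
    Subsingleton (((Ext R (ModuleCat.{0} R) i).obj (Opposite.op C)).obj C)

/-- `C` has finite injective dimension: for some `n`, `Ext^i_R(M, C) = 0` for all
modules `M` and all `i > n`. -/
def HasFiniteInjDim {R : Type} [CommRing R] (C : ModuleCat.{0} R) : Prop :=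
  ∃ n : ℕ, ∀ i : ℕ, n < i → ∀ M : ModuleCat.{0} R,
    Subsingleton (((Ext R (ModuleCat.{0} R) i).obj (Opposite.op M)).obj C)

end LadderDet

/-!
Weight the variable `X_{pq}` by `1` if `(p, q)` lies weakly northwest of the upper inside corner
`(c, d)` and by `0` otherwise. No entry of a ladder lies strictly southeast of an upper inside
corner, so every `2`-minor is homogeneous for this weight, and so is every monomial ideal, while
`P ^ e` is spanned by the monomials of weight at least `e`. If `a ∈ P ^ e` and `b ∈ M` have the
same image in `R_2(Y)`, then the part of `b` of weight at least `e` lies in `P ^ e ∩ M` and has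
that image too: truncation fixes `a` and keeps `a - b` in the homogeneous ideal `I_2(Y)`.
-/

namespace MvPolynomial

open Finsupp

variable {σ R : Type*}

section Truncation

variable [CommRing R] (w : σ → ℕ) (e : ℕ)

noncomputable def weightTrunc (f : MvPolynomial σ R) : MvPolynomial σ R :=
  ∑ m ∈ (f.support.image (weight w)).filter (e ≤ ·), weightedHomogeneousComponent w m f

theorem coeff_weightTrunc (f : MvPolynomial σ R) (s : σ →₀ ℕ) :
    coeff s (weightTrunc w e f) = if e ≤ weight w s then coeff s f else 0 := by
  classical
  simp only [weightTrunc, coeff_sum, coeff_weightedHomogeneousComponent]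
  rw [Finset.sum_ite_eq]
  by_cases hs : coeff s f = 0
  · simp [hs]
  · have hmem : weight w s ∈ f.support.image (weight w) :=
      Finset.mem_image_of_mem _ (mem_support_iff.mpr hs)
    simp [Finset.mem_filter, hmem]

theorem weightTrunc_sub (f g : MvPolynomial σ R) :
    weightTrunc w e (f - g) = weightTrunc w e f - weightTrunc w e g := by
  ext s
  simp only [coeff_weightTrunc, coeff_sub]
  split_ifs <;> simp

theorem weightTrunc_eq_self {f : MvPolynomial σ R} (hf : ∀ s ∈ f.support, e ≤ weight w s) :
    weightTrunc w e f = f := by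
  ext s
  rw [coeff_weightTrunc]
  split_ifs with hs
  · rfl
  · exact (notMem_support_iff.mp fun h => hs (hf s h)).symm

theorem le_weight_of_mem_support_weightTrunc {f : MvPolynomial σ R} {s : σ →₀ ℕ}
    (hs : s ∈ (weightTrunc w e f).support) : e ≤ weight w s := by
  by_contra h
  simp [coeff_weightTrunc, h] at hs

end Truncation

section WeightIdeal

variable [CommSemiring R] (w : σ → ℕ)

theorem _root_.Finsupp.weight_mono : Monotone (weight w : (σ →₀ ℕ) → ℕ) := by
  intro s t hst
  obtain ⟨u, rfl⟩ := le_iff_exists_add.mp hst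
  rw [map_add]
  exact le_self_add

noncomputable def weightGeIdeal (e : ℕ) : Ideal (MvPolynomial σ R) :=
  Ideal.span ((fun s => monomial s 1) '' {s | e ≤ weight w s})

variable {w} in
theorem mem_weightGeIdeal_iff {e : ℕ} {f : MvPolynomial σ R} :
    f ∈ weightGeIdeal w e ↔ ∀ s ∈ f.support, e ≤ weight w s := by
  rw [weightGeIdeal, mem_ideal_span_monomial_image]
  exact forall₂_congr fun s _ =>
    ⟨fun ⟨t, ht, hts⟩ => ht.trans (weight_mono w hts), fun h => ⟨s, h, le_rfl⟩⟩

theorem weightGeIdeal_zero : weightGeIdeal w 0 = (⊤ : Ideal (MvPolynomial σ R)) :=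
  (Ideal.eq_top_iff_one _).mpr (mem_weightGeIdeal_iff.mpr fun _ _ => Nat.zero_le _)

theorem weightGeIdeal_mul_le (a b : ℕ) :
    weightGeIdeal w a * weightGeIdeal w b ≤
      (weightGeIdeal w (a + b) : Ideal (MvPolynomial σ R)) := by
  classical
  refine Ideal.mul_le.mpr fun f hf g hg => mem_weightGeIdeal_iff.mpr fun s hs => ?_
  obtain ⟨s₁, hs₁, s₂, hs₂, rfl⟩ := Finset.mem_add.mp (support_mul f g hs)
  rw [map_add]
  exact add_le_add (mem_weightGeIdeal_iff.mp hf s₁ hs₁) (mem_weightGeIdeal_iff.mp hg s₂ hs₂)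

theorem span_X_image_pow (S : Set σ) (e : ℕ) :
    Ideal.span (X '' S : Set (MvPolynomial σ R)) ^ e = weightGeIdeal (S.indicator 1) e := by
  set P := Ideal.span (X '' S : Set (MvPolynomial σ R))
  apply le_antisymm
  · have hP : P ≤ weightGeIdeal (S.indicator 1) 1 := by
      refine Ideal.span_le.mpr ?_
      rintro _ ⟨i, hi, rfl⟩
      exact Ideal.subset_span ⟨Finsupp.single i 1, by simp [weight_single, hi], rfl⟩
    induction e with
    | zero => rw [pow_zero, Ideal.one_eq_top, weightGeIdeal_zero]
    | succ e ih => exact (pow_succ P e ▸ Ideal.mul_mono ih hP).trans (weightGeIdeal_mul_le _ e 1)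
  · refine Ideal.span_le.mpr ?_
    rintro _ ⟨s, hs, rfl⟩
    refine Ideal.pow_le_pow_right hs ?_
    dsimp only
    rw [← prod_X_pow_eq_monomial, weight_apply, Finsupp.sum, ← Finset.prod_pow_eq_pow_sum]
    refine Ideal.prod_mem_prod fun i _ => ?_
    by_cases hi : i ∈ S
    · simpa [hi] using Ideal.pow_mem_pow (Ideal.subset_span ⟨i, hi, rfl⟩ : X i ∈ P) (s i)
    · simp [hi]

end WeightIdeal

section Homogeneous

attribute [local instance] weightedGradedAlgebra

variable [CommRing R] (w : σ → ℕ)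

theorem weightTrunc_mem {I : Ideal (MvPolynomial σ R)}
    (hI : I.IsHomogeneous (weightedHomogeneousSubmodule R w)) (e : ℕ) {f : MvPolynomial σ R}
    (hf : f ∈ I) : weightTrunc w e f ∈ I :=
  Ideal.sum_mem _ fun m _ => weightedHomogeneousComponent_mem_of_mem R w hI hf m

theorem isHomogeneous_span_monomial (S : Set (σ →₀ ℕ)) :
    (Ideal.span ((fun s => monomial s (1 : R)) '' S)).IsHomogeneous
      (weightedHomogeneousSubmodule R w) := by
  refine Ideal.homogeneous_span _ _ ?_
  rintro _ ⟨s, _, rfl⟩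
  exact ⟨weight w s, isWeightedHomogeneous_monomial w s 1 rfl⟩

theorem map_weightGeIdeal_inf_map {I M : Ideal (MvPolynomial σ R)}
    (hI : I.IsHomogeneous (weightedHomogeneousSubmodule R w))
    (hM : M.IsHomogeneous (weightedHomogeneousSubmodule R w)) (e : ℕ) :
    (weightGeIdeal w e).map (Ideal.Quotient.mk I) ⊓ M.map (Ideal.Quotient.mk I) =
      (weightGeIdeal w e ⊓ M).map (Ideal.Quotient.mk I) := by
  refine le_antisymm ?_ (Ideal.map_inf_le _)
  rintro z ⟨hzJ, hzM⟩
  obtain ⟨a, ha, rfl⟩ := (Ideal.mem_map_iff_of_surjective _ Ideal.Quotient.mk_surjective).mp hzJ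
  obtain ⟨b, hb, hba⟩ := (Ideal.mem_map_iff_of_surjective _ Ideal.Quotient.mk_surjective).mp hzM
  have hab : a - b ∈ I := Ideal.Quotient.eq.mp hba.symm
  have hmk : Ideal.Quotient.mk I a = Ideal.Quotient.mk I (weightTrunc w e b) := by
    rw [Ideal.Quotient.eq, ← weightTrunc_eq_self w e (mem_weightGeIdeal_iff.mp ha),
      ← weightTrunc_sub]
    exact weightTrunc_mem w hI e hab
  rw [hmk]
  exact Ideal.mem_map_of_mem _ ⟨mem_weightGeIdeal_iff.mpr fun _ =>
    le_weight_of_mem_support_weightTrunc w e, weightTrunc_mem w hM e hb⟩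

end Homogeneous

end MvPolynomial

open MvPolynomial

namespace LadderDet

attribute [local instance] MvPolynomial.weightedGradedAlgebra

theorem IsUpperCorner.not_southeast {m n : ℕ} {Y : Set (ℕ × ℕ)} (hY : IsLadder m n Y)
    {c d : ℕ} (hcd : IsUpperCorner Y (c, d)) {p q : ℕ} (hpq : (p, q) ∈ Y) :
    ¬ (c < p ∧ d < q) := by
  rintro ⟨hp, hq⟩
  obtain ⟨-, hbelow, hright, hdiag⟩ := hcd
  have hcorner := (hY.2 (c + 1) d p q hbelow hpq (by omega) (by omega)).1
  exact hdiag (hY.2 c (d + 1) (c + 1) q hright hcorner (by omega) (by omega)).2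

def northwest (Y : Set (ℕ × ℕ)) (c d : ℕ) : Set Y := {x | x.1.1 ≤ c ∧ x.1.2 ≤ d}

variable (k : Type) [Field k]

theorem minorPoly_two {Y : Set (ℕ × ℕ)} (r s : Fin 2 → ℕ) (h : ∀ u v, (r u, s v) ∈ Y) :
    minorPoly k r s h =
      X ⟨_, h 0 0⟩ * X ⟨_, h 1 1⟩ - X ⟨_, h 0 1⟩ * X ⟨_, h 1 0⟩ :=
  Matrix.det_fin_two _

theorem isHomogeneous_minorIdeal_two {m n : ℕ} {Y : Set (ℕ × ℕ)} (hY : IsLadder m n Y)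
    {c d : ℕ} (hcd : IsUpperCorner Y (c, d)) :
    (minorIdeal k 2 Y).IsHomogeneous
      (weightedHomogeneousSubmodule k ((northwest Y c d).indicator (1 : Y → ℕ))) := by
  refine Ideal.homogeneous_span _ _ ?_
  rintro _ ⟨r, s, hr, hs, h, rfl⟩
  set w := (northwest Y c d).indicator (1 : Y → ℕ)
  refine ⟨w ⟨_, h 0 0⟩ + w ⟨_, h 1 1⟩, ?_⟩
  rw [mem_weightedHomogeneousSubmodule, minorPoly_two]
  refine ((isWeightedHomogeneous_X k w _).mul (isWeightedHomogeneous_X k w _)).sub ?_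
  have hweight : w ⟨_, h 0 1⟩ + w ⟨_, h 1 0⟩ = w ⟨_, h 0 0⟩ + w ⟨_, h 1 1⟩ := by
    have hr01 : r 0 < r 1 := hr Fin.zero_lt_one
    have hs01 : s 0 < s 1 := hs Fin.zero_lt_one
    have hse := hcd.not_southeast hY (h 1 1)
    simp only [w, Set.indicator, northwest, Set.mem_ofPred_eq, Pi.one_apply]
    split_ifs <;> omega
  rw [← hweight]
  exact (isWeightedHomogeneous_X k w _).mul (isWeightedHomogeneous_X k w _)

theorem span_northwest_eq {Y : Set (ℕ × ℕ)} (c d : ℕ) :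
    Ideal.span {f | ∃ p q, ∃ h : (p, q) ∈ Y,
      p ≤ c ∧ q ≤ d ∧ f = MvPolynomial.X ⟨(p, q), h⟩} =
      Ideal.span (X '' northwest Y c d : Set (MvPolynomial Y k)) := by
  congr 1
  ext f
  constructor
  · rintro ⟨p, q, h, hp, hq, rfl⟩
    exact ⟨⟨(p, q), h⟩, ⟨hp, hq⟩, rfl⟩
  · rintro ⟨⟨⟨p, q⟩, h⟩, ⟨hp, hq⟩, rfl⟩
    exact ⟨p, q, h, hp, hq, rfl⟩

theorem image_inter_P_pow_general (m n : ℕ) (k : Type) [Field k] (Y : Set (ℕ × ℕ))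
    (hY : StdLadder m n Y)
    (c d : ℕ) (hcd : IsUpperCorner Y (c, d))
    (P : Ideal (MvPolynomial Y k))
    (hP : P = Ideal.span {f | ∃ p q, ∃ h : (p, q) ∈ Y,
      p ≤ c ∧ q ≤ d ∧ f = MvPolynomial.X ⟨(p, q), h⟩})
    (e : ℕ)
    (M : Ideal (MvPolynomial Y k)) (hM : IsMonomialIdeal M)
    (π : MvPolynomial Y k →+* LadderRing k 2 Y)
    (hπ : π = Ideal.Quotient.mk (minorIdeal k 2 Y)) :
    Ideal.map π (P ^ e) ⊓ Ideal.map π M = Ideal.map π (P ^ e ⊓ M) := by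
  obtain ⟨S, rfl⟩ := hM
  subst hπ hP
  rw [span_northwest_eq, span_X_image_pow]
  exact map_weightGeIdeal_inf_map _ (isHomogeneous_minorIdeal_two k hY.1 hcd)
    (isHomogeneous_span_monomial _ S) e

/-- Let `Y` be a `2`-connected ladder, `π : k[Y] → R_2(Y)` the quotient
map, `P` the ideal of `k[Y]` generated by the variables `X_{pq}` with `(p,q) ∈ Y`,
`p ≤ c_j`, `q ≤ d_j`, for an upper inside corner `(c_j, d_j)`, and `J = P ^ e` with
`e ≥ 1`. Then for every monomial ideal `M` of `k[Y]` one has `π(J) ∩ π(M) = π(J ∩ M)`. -/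
theorem image_inter_P_pow (m n : ℕ) (k : Type) [Field k] (Y : Set (ℕ × ℕ))
    (hY : StdLadder m n Y) (hconn : TConnected m n 2 Y)
    (c d : ℕ) (hcd : IsUpperCorner Y (c, d))
    (P : Ideal (MvPolynomial Y k))
    (hP : P = Ideal.span {f | ∃ p q, ∃ h : (p, q) ∈ Y,
      p ≤ c ∧ q ≤ d ∧ f = MvPolynomial.X ⟨(p, q), h⟩})
    (e : ℕ) (he : 1 ≤ e)
    (M : Ideal (MvPolynomial Y k)) (hM : IsMonomialIdeal M)
    (π : MvPolynomial Y k →+* LadderRing k 2 Y)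
    (hπ : π = Ideal.Quotient.mk (minorIdeal k 2 Y)) :
    Ideal.map π (P ^ e) ⊓ Ideal.map π M = Ideal.map π (P ^ e ⊓ M) :=
  image_inter_P_pow_general m n k Y hY c d hcd P hP e M hM π hπ

end LadderDet
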